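/- With the notation of the tensor product RKHS H(K)^{⊗d} (λ_k ≍ k^{−2α}) and the subspaces M, L as above: (i) ‖A − A ×_y P_L‖²_{L²} ≤ C d2 ℓ^{−2α} ‖A‖²_{H(K)^{⊗d}}; (ii) ‖A ×_y P_L − A ×_x P_M ×_y P_L‖²_{L²} ≤ C d1 m^{−2α} ‖A‖²_{H(K)^{⊗d}}. -/

import Mathlib

open MeasureTheory

/-- Lebesgue measure on `[0,1]`. -/
noncomputable def unitMeasure : Measure ℝ := volume.restrict (Set.Icc 0 1)

/-- The coefficient `A[φ_{k_1},…,φ_{k_d}]` of `A ∈ L²([0,1]^d)` against the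
product of one-dimensional basis functions. -/
noncomputable def tensorCoef (d : ℕ) (φ : ℕ → Lp ℝ 2 unitMeasure)
    (A : Lp ℝ 2 (Measure.pi fun _ : Fin d => unitMeasure)) (kv : Fin d → ℕ) : ℝ :=
  ∫ z, A z * ∏ j, (φ (kv j) : ℝ → ℝ) (z j) ∂(Measure.pi fun _ : Fin d => unitMeasure)

/-!
The products `x ↦ ∏ i, φ (k i) (x i)` form a Hilbert basis of `L²([0,1]^d)`. They are orthonormal
because inner products of elementary tensors factor. They are total because the tensor product is
continuous and multilinear, so each factor may be approximated separately by the one-dimensional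
basis, and because a function orthogonal to the indicators of all boxes has vanishing integral over
every measurable set (Dynkin's π-λ theorem).

By Parseval, `‖A - B‖²` is the sum of the squared differences of coefficients, which vanish on the
kept indices and equal the coefficients of `A` on the dropped ones. A dropped index `k` has an
entry `k j ≥ n` in the truncated block, so `∏ i, λ (k i) ≤ max 1 c2 ^ d * n ^ (-2α)`, all other
factors being at most `max 1 c2`; hence `A_k² ≤ C n ^ (-2α) · A_k² / ∏ i, λ (k i)`, and the
block length `d₁` or `d₂` can be inserted as a factor because that block contains `j`.
-/

namespace MeasureTheory

variable {α E : Type*} [m : MeasurableSpace α] {μ : Measure α}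
  [NormedAddCommGroup E] [NormedSpace ℝ E] [CompleteSpace E]

theorem Integrable.ae_eq_zero_of_forall_setIntegral_isPiSystem_eq_zero
    {S : Set (Set α)} (h_gen : m = MeasurableSpace.generateFrom S) (hS : IsPiSystem S)
    {f : α → E} (hf : Integrable f μ) (h_univ : ∫ x, f x ∂μ = 0)
    (h : ∀ t ∈ S, ∫ x in t, f x ∂μ = 0) : f =ᵐ[μ] 0 := by
  refine hf.ae_eq_zero_of_forall_setIntegral_eq_zero fun t ht htμ => ?_
  clear htμ
  induction t, ht using MeasurableSpace.induction_on_inter h_gen hS with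
  | empty => simp
  | basic t ht => exact h t ht
  | compl t ht iht => rw [setIntegral_compl ht hf, h_univ, iht, sub_zero]
  | iUnion t hdisj ht iht =>
    rw [integral_iUnion ht hdisj hf.integrableOn, tsum_congr iht, tsum_zero]

end MeasureTheory

theorem ContinuousMultilinearMap.apply_mem_topologicalClosure_span
    {𝕜 ι G : Type*} {E κ : ι → Type*} [Fintype ι] [NontriviallyNormedField 𝕜]
    [∀ i, NormedAddCommGroup (E i)] [∀ i, NormedSpace 𝕜 (E i)]
    [NormedAddCommGroup G] [NormedSpace 𝕜 G]
    (F : ContinuousMultilinearMap 𝕜 E G) (φ : ∀ i, κ i → E i)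
    (hφ : ∀ i, (Submodule.span 𝕜 (Set.range (φ i))).topologicalClosure = ⊤) (g : ∀ i, E i) :
    F g ∈ (Submodule.span 𝕜
      (Set.range fun k : ∀ i, κ i => F fun i => φ i (k i))).topologicalClosure := by
  classical
  set V := (Submodule.span 𝕜
    (Set.range fun k : ∀ i, κ i => F fun i => φ i (k i))).topologicalClosure
  -- replace the factors by basis vectors one slot at a time, by linearity and continuity there
  suffices H : ∀ s : Finset ι, ∀ g : ∀ i, E i, (∀ i ∉ s, g i ∈ Set.range (φ i)) → F g ∈ V from
    H Finset.univ g fun i hi => absurd (Finset.mem_univ i) hi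
  intro s
  induction s using Finset.induction_on with
  | empty =>
    intro g hg
    choose k hk using fun i => hg i (Finset.notMem_empty i)
    obtain rfl : g = fun i => φ i (k i) := funext fun i => (hk i).symm
    exact Submodule.le_topologicalClosure _ (Submodule.subset_span (Set.mem_range_self k))
  | insert i s _ ih =>
    intro g hg
    have hspan : Submodule.span 𝕜 (Set.range (φ i)) ≤
        V.comap (F.toContinuousLinearMap g i : E i →ₗ[𝕜] G) := by
      rw [Submodule.span_le]
      rintro _ ⟨k, rfl⟩
      refine ih _ fun j hj => ?_
      rcases eq_or_ne j i with rfl | hji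
      · simp
      · simpa [hji] using hg j (by simp [hji, hj])
    have hclosed : IsClosed ((V.comap (F.toContinuousLinearMap g i : E i →ₗ[𝕜] G)) : Set (E i)) :=
      (Submodule.isClosed_topologicalClosure _ : IsClosed (V : Set G)).preimage
        (F.toContinuousLinearMap g i).continuous
    have := Submodule.topologicalClosure_minimal _ hspan hclosed
    rw [hφ i] at this
    simpa using this (Submodule.mem_top (x := g i))

namespace MeasureTheory

variable {ι : Type*} [Fintype ι] {X : ι → Type*} [∀ i, MeasurableSpace (X i)]
  {μ : ∀ i, Measure (X i)}

theorem prod_update_coeFn_apply [DecidableEq ι] (g : ∀ i, Lp ℝ 2 (μ i)) (i : ι)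
    (a : Lp ℝ 2 (μ i)) (x : ∀ i, X i) :
    ∏ j, Function.update g i a j (x j) = a (x i) * ∏ j ∈ Finset.univ.erase i, g j (x j) := by
  rw [← Finset.mul_prod_erase _ _ (Finset.mem_univ i), Function.update_self]
  congr 1
  exact Finset.prod_congr rfl fun j hj => by
    rw [Function.update_of_ne (Finset.ne_of_mem_erase hj)]

section SigmaFinite

variable [∀ i, SigmaFinite (μ i)]

theorem memLp_two_prod_apply (g : ∀ i, Lp ℝ 2 (μ i)) :
    MemLp (fun x => ∏ i, g i (x i)) 2 (Measure.pi μ) := by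
  have hmeas : AEStronglyMeasurable (fun x => ∏ i, g i (x i)) (Measure.pi μ) :=
    Finset.aestronglyMeasurable_fun_prod _ fun i _ =>
      (Lp.aestronglyMeasurable (g i)).comp_quasiMeasurePreserving
        (Measure.quasiMeasurePreserving_eval μ i)
  rw [memLp_two_iff_integrable_sq hmeas]
  simp_rw [← Finset.prod_pow]
  exact Integrable.fintype_prod_dep fun i =>
    (memLp_two_iff_integrable_sq (Lp.aestronglyMeasurable (g i))).1 (Lp.memLp (g i))

noncomputable def tensorLp (g : ∀ i, Lp ℝ 2 (μ i)) : Lp ℝ 2 (Measure.pi μ) :=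
  (memLp_two_prod_apply g).toLp _

theorem tensorLp_coeFn (g : ∀ i, Lp ℝ 2 (μ i)) :
    tensorLp g =ᵐ[Measure.pi μ] fun x => ∏ i, g i (x i) :=
  MemLp.coeFn_toLp _

theorem inner_tensorLp_left (g : ∀ i, Lp ℝ 2 (μ i)) (f : Lp ℝ 2 (Measure.pi μ)) :
    inner ℝ (tensorLp g) f = ∫ x, (∏ i, g i (x i)) * f x ∂Measure.pi μ := by
  rw [L2.inner_def]
  refine integral_congr_ae ?_
  filter_upwards [tensorLp_coeFn g] with x hx
  rw [RCLike.inner_apply, conj_trivial, hx, mul_comm]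

theorem inner_tensorLp_tensorLp (g h : ∀ i, Lp ℝ 2 (μ i)) :
    inner ℝ (tensorLp g) (tensorLp h) = ∏ i, inner ℝ (g i) (h i) := by
  rw [inner_tensorLp_left]
  calc ∫ x, (∏ i, g i (x i)) * tensorLp h x ∂Measure.pi μ
      = ∫ x, ∏ i, g i (x i) * h i (x i) ∂Measure.pi μ := by
        refine integral_congr_ae ?_
        filter_upwards [tensorLp_coeFn h] with x hx
        rw [hx, Finset.prod_mul_distrib]
    _ = ∏ i, inner ℝ (g i) (h i) := by
        rw [integral_fintype_prod_eq_prod (fun i y => g i y * h i y)]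
        refine Finset.prod_congr rfl fun i _ => ?_
        rw [L2.inner_def]
        simp_rw [RCLike.inner_apply, conj_trivial, mul_comm]

theorem norm_tensorLp (g : ∀ i, Lp ℝ 2 (μ i)) : ‖tensorLp g‖ = ∏ i, ‖g i‖ := by
  have hsq : ‖tensorLp g‖ ^ 2 = (∏ i, ‖g i‖) ^ 2 := by
    simp_rw [← real_inner_self_eq_norm_sq, inner_tensorLp_tensorLp, ← Finset.prod_pow,
      real_inner_self_eq_norm_sq]
  exact (pow_left_inj₀ (norm_nonneg _) (by positivity) two_ne_zero).1 hsq

theorem tensorLp_update_add [DecidableEq ι] (g : ∀ i, Lp ℝ 2 (μ i)) (i : ι)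
    (a b : Lp ℝ 2 (μ i)) :
    tensorLp (Function.update g i (a + b)) =
      tensorLp (Function.update g i a) + tensorLp (Function.update g i b) := by
  apply Lp.ext
  filter_upwards [tensorLp_coeFn (Function.update g i (a + b)),
    Lp.coeFn_add (tensorLp (Function.update g i a)) (tensorLp (Function.update g i b)),
    tensorLp_coeFn (Function.update g i a), tensorLp_coeFn (Function.update g i b),
    Measure.tendsto_eval_ae_ae.eventually (Lp.coeFn_add a b)] with x h h₁ ha hb hab
  rw [h, h₁, Pi.add_apply, ha, hb, prod_update_coeFn_apply, prod_update_coeFn_apply,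
    prod_update_coeFn_apply, hab, Pi.add_apply, add_mul]

theorem tensorLp_update_smul [DecidableEq ι] (g : ∀ i, Lp ℝ 2 (μ i)) (i : ι) (c : ℝ)
    (a : Lp ℝ 2 (μ i)) :
    tensorLp (Function.update g i (c • a)) = c • tensorLp (Function.update g i a) := by
  apply Lp.ext
  filter_upwards [tensorLp_coeFn (Function.update g i (c • a)),
    Lp.coeFn_smul c (tensorLp (Function.update g i a)), tensorLp_coeFn (Function.update g i a),
    Measure.tendsto_eval_ae_ae.eventually (Lp.coeFn_smul c a)] with x h h₁ ha hca
  rw [h, h₁, Pi.smul_apply, ha, prod_update_coeFn_apply, prod_update_coeFn_apply, hca,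
    Pi.smul_apply, smul_eq_mul, smul_eq_mul, mul_assoc]

variable (μ) in
noncomputable def tensorLpL :
    ContinuousMultilinearMap ℝ (fun i => Lp ℝ 2 (μ i)) (Lp ℝ 2 (Measure.pi μ)) :=
  MultilinearMap.mkContinuous
    { toFun := tensorLp
      map_update_add' := tensorLp_update_add
      map_update_smul' := tensorLp_update_smul }
    1 fun g => by simp [norm_tensorLp]

theorem orthonormal_tensorLp {κ : ι → Type*} (φ : ∀ i, κ i → Lp ℝ 2 (μ i))
    (hφ : ∀ i, Orthonormal ℝ (φ i)) :
    Orthonormal ℝ fun k : ∀ i, κ i => tensorLp fun i => φ i (k i) := by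
  classical
  rw [orthonormal_iff_ite]
  intro k k'
  simp_rw [inner_tensorLp_tensorLp, fun i => orthonormal_iff_ite.1 (hφ i) (k i) (k' i),
    Finset.prod_boole]
  simp [funext_iff]

end SigmaFinite

section IsFiniteMeasure

variable [∀ i, IsFiniteMeasure (μ i)]

theorem tensorLp_indicatorConstLp {I : ∀ i, Set (X i)}
    (hI : ∀ i, MeasurableSet (I i)) :
    tensorLp (fun i => indicatorConstLp 2 (hI i) (measure_ne_top (μ i) (I i)) (1 : ℝ)) =
      indicatorConstLp 2 (MeasurableSet.univ_pi hI) (measure_ne_top _ _) 1 := by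
  apply Lp.ext
  filter_upwards [tensorLp_coeFn fun i => indicatorConstLp 2 (hI i) (measure_ne_top (μ i) _) 1,
    indicatorConstLp_coeFn (p := 2) (hs := MeasurableSet.univ_pi hI) (hμs := measure_ne_top _ _)
      (c := (1 : ℝ)),
    Filter.eventually_all.2 fun i => Measure.tendsto_eval_ae_ae.eventually
      (indicatorConstLp_coeFn (p := 2) (hs := hI i) (hμs := measure_ne_top (μ i) _)
        (c := (1 : ℝ)))]
    with x h hbox hI'
  rw [h, hbox]
  simp only [Function.eval] at hI'
  simp_rw [hI']
  have hprod := Set.indicator_pi_one_apply (M₀ := ℝ) Finset.univ I x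
  rw [Finset.coe_univ] at hprod
  exact hprod.symm

theorem orthogonal_span_range_tensorLp_eq_bot :
    (Submodule.span ℝ (Set.range (tensorLp (μ := μ))))ᗮ = ⊥ := by
  refine (Submodule.eq_bot_iff _).2 fun f hf => ?_
  rw [Submodule.mem_orthogonal] at hf
  have hbox : ∀ t ∈ Set.univ.pi '' Set.univ.pi fun i => {s : Set (X i) | MeasurableSet s},
      ∫ x in t, f x ∂Measure.pi μ = 0 := by
    rintro _ ⟨I, hI, rfl⟩
    have hI' : ∀ i, MeasurableSet (I i) := fun i => hI i (Set.mem_univ i)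
    rw [← L2.inner_indicatorConstLp_one (MeasurableSet.univ_pi hI') (measure_ne_top _ _),
      ← tensorLp_indicatorConstLp hI']
    exact hf _ (Submodule.subset_span (Set.mem_range_self _))
  have hint : ∫ x, f x ∂Measure.pi μ = 0 := by
    simpa using hbox Set.univ ⟨fun _ => Set.univ, fun _ _ => MeasurableSet.univ, by simp⟩
  rw [Lp.eq_zero_iff_ae_eq_zero]
  exact ((Lp.memLp f).integrable one_le_two).ae_eq_zero_of_forall_setIntegral_isPiSystem_eq_zero
    generateFrom_pi.symm isPiSystem_pi hint hbox

theorem orthogonal_span_tensorLp_eq_bot {κ : ι → Type*} (φ : ∀ i, κ i → Lp ℝ 2 (μ i))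
    (hφ : ∀ i, (Submodule.span ℝ (Set.range (φ i))).topologicalClosure = ⊤) :
    (Submodule.span ℝ (Set.range fun k : ∀ i, κ i => tensorLp fun i => φ i (k i)))ᗮ = ⊥ := by
  classical
  refine eq_bot_iff.2 ?_
  rw [← orthogonal_span_range_tensorLp_eq_bot, ← Submodule.orthogonal_closure]
  refine Submodule.orthogonal_le (Submodule.span_le.2 ?_)
  rintro _ ⟨g, rfl⟩
  exact (tensorLpL μ).apply_mem_topologicalClosure_span φ hφ g

noncomputable def tensorHilbertBasis {κ : ι → Type*} (φ : ∀ i, κ i → Lp ℝ 2 (μ i))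
    (hON : ∀ i, Orthonormal ℝ (φ i))
    (htotal : ∀ i, (Submodule.span ℝ (Set.range (φ i))).topologicalClosure = ⊤) :
    HilbertBasis (∀ i, κ i) ℝ (Lp ℝ 2 (Measure.pi μ)) :=
  .mkOfOrthogonalEqBot (orthonormal_tensorLp φ hON) (orthogonal_span_tensorLp_eq_bot φ htotal)

@[simp]
theorem coe_tensorHilbertBasis {κ : ι → Type*} (φ : ∀ i, κ i → Lp ℝ 2 (μ i))
    (hON : ∀ i, Orthonormal ℝ (φ i))
    (htotal : ∀ i, (Submodule.span ℝ (Set.range (φ i))).topologicalClosure = ⊤) :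
    ⇑(tensorHilbertBasis φ hON htotal) = fun k => tensorLp fun i => φ i (k i) :=
  HilbertBasis.coe_mkOfOrthogonalEqBot _ _

end IsFiniteMeasure

end MeasureTheory

theorem HilbertBasis.norm_sq_eq_tsum_inner_sq {ι E : Type*} [NormedAddCommGroup E]
    [InnerProductSpace ℝ E] (b : HilbertBasis ι ℝ E) (x : E) :
    ‖x‖ ^ 2 = ∑' i, inner ℝ (b i) x ^ 2 := by
  simp_rw [← real_inner_self_eq_norm_sq, ← b.tsum_inner_mul_inner x x, real_inner_comm x, sq]

instance : IsProbabilityMeasure unitMeasure :=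
  ⟨by simp [unitMeasure, Real.volume_Icc]⟩

theorem tensorCoef_eq_inner {d : ℕ} (φ : ℕ → Lp ℝ 2 unitMeasure)
    (A : Lp ℝ 2 (Measure.pi fun _ : Fin d => unitMeasure)) (kv : Fin d → ℕ) :
    tensorCoef d φ A kv = inner ℝ (tensorLp fun i => φ (kv i)) A := by
  simp_rw [inner_tensorLp_left, tensorCoef, mul_comm]

theorem norm_sub_sq_le_of_tensorCoef_sq_le {d : ℕ} {φ : ℕ → Lp ℝ 2 unitMeasure}
    (hON : Orthonormal ℝ φ) (htotal : (Submodule.span ℝ (Set.range φ)).topologicalClosure = ⊤)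
    {A B : Lp ℝ 2 (Measure.pi fun _ : Fin d => unitMeasure)} {w : (Fin d → ℕ) → ℝ}
    (hw : Summable w) {K : ℝ}
    (h : ∀ kv, (tensorCoef d φ A kv - tensorCoef d φ B kv) ^ 2 ≤ K * w kv) :
    ‖A - B‖ ^ 2 ≤ K * ∑' kv, w kv := by
  let b := tensorHilbertBasis (fun _ : Fin d => φ) (fun _ => hON) (fun _ => htotal)
  have hcoef : ∀ kv, inner ℝ (b kv) (A - B) = tensorCoef d φ A kv - tensorCoef d φ B kv := by
    intro kv
    rw [coe_tensorHilbertBasis, inner_sub_right, tensorCoef_eq_inner, tensorCoef_eq_inner]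
  rw [b.norm_sq_eq_tsum_inner_sq, ← tsum_mul_left]
  simp_rw [hcoef]
  have hKw := hw.mul_left K
  exact Summable.tsum_le_tsum h (hKw.of_nonneg_of_le (fun _ => sq_nonneg _) h) hKw

section EigenvalueDecay

variable {d : ℕ} {lam : ℕ → ℝ} {c α : ℝ}

theorem prod_le_pow_mul_rpow_of_le_apply (hα : 0 ≤ α) (hpos : ∀ k, 0 < lam k)
    (hle : ∀ k : ℕ, lam k ≤ c * ((k : ℝ) + 1) ^ (-(2 * α))) {kv : Fin d → ℕ} {j : Fin d}
    {n : ℕ} (hn : 0 < n) (hkv : n ≤ kv j) :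
    ∏ i, lam (kv i) ≤ max 1 c ^ d * (n : ℝ) ^ (-(2 * α)) := by
  have hexp : -(2 * α) ≤ 0 := by linarith
  have hle' : ∀ k, lam k ≤ max 1 c * ((k : ℝ) + 1) ^ (-(2 * α)) := fun k =>
    (hle k).trans (mul_le_mul_of_nonneg_right (le_max_right _ _) (by positivity))
  have hle_max : ∀ k, lam k ≤ max 1 c := fun k =>
    (hle' k).trans (mul_le_of_le_one_right (by positivity)
      (Real.rpow_le_one_of_one_le_of_nonpos (by simp) hexp))
  have hj : lam (kv j) ≤ max 1 c * (n : ℝ) ^ (-(2 * α)) :=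
    (hle' _).trans (mul_le_mul_of_nonneg_left (Real.rpow_le_rpow_of_nonpos (by positivity)
      (by exact_mod_cast hkv.trans (Nat.le_succ _)) hexp) (by positivity))
  have hd : d = (Finset.univ.erase j).card + 1 := by simp [Nat.sub_add_cancel (Fin.pos j)]
  calc ∏ i, lam (kv i) = lam (kv j) * ∏ i ∈ Finset.univ.erase j, lam (kv i) :=
        (Finset.mul_prod_erase _ _ (Finset.mem_univ j)).symm
    _ ≤ max 1 c * (n : ℝ) ^ (-(2 * α)) * ∏ _i ∈ Finset.univ.erase j, max 1 c :=
        mul_le_mul hj (Finset.prod_le_prod (fun i _ => (hpos _).le) fun i _ => hle_max _)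
          (Finset.prod_nonneg fun i _ => (hpos _).le) (by positivity)
    _ = max 1 c ^ d * (n : ℝ) ^ (-(2 * α)) := by
        rw [Finset.prod_const, mul_right_comm, ← pow_succ', ← hd]

theorem sq_le_of_apply_ge_of_mem_block (hα : 0 ≤ α) (hpos : ∀ k, 0 < lam k)
    (hle : ∀ k : ℕ, lam k ≤ c * ((k : ℝ) + 1) ^ (-(2 * α))) {kv : Fin d → ℕ} {j : Fin d}
    {s N n : ℕ} (hj : s ≤ (j : ℕ) ∧ (j : ℕ) < s + N) (hn : 0 < n) (hkv : n ≤ kv j) (a : ℝ) :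
    a ^ 2 ≤ max 1 c ^ d * N * (n : ℝ) ^ (-(2 * α)) * ((∏ i, lam (kv i))⁻¹ * a ^ 2) := by
  have hprod : 0 < ∏ i, lam (kv i) := Finset.prod_pos fun i _ => hpos _
  have hN : (1 : ℝ) ≤ N := by exact_mod_cast (by omega : 1 ≤ N)
  calc a ^ 2 = (∏ i, lam (kv i)) * ((∏ i, lam (kv i))⁻¹ * a ^ 2) := by field_simp
    _ ≤ max 1 c ^ d * (n : ℝ) ^ (-(2 * α)) * ((∏ i, lam (kv i))⁻¹ * a ^ 2) := by
        gcongr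
        exact prod_le_pow_mul_rpow_of_le_apply hα hpos hle hn hkv
    _ ≤ max 1 c ^ d * N * (n : ℝ) ^ (-(2 * α)) * ((∏ i, lam (kv i))⁻¹ * a ^ 2) := by
        have h0 : 0 ≤ max 1 c ^ d * (n : ℝ) ^ (-(2 * α)) * ((∏ i, lam (kv i))⁻¹ * a ^ 2) :=
          mul_nonneg (by positivity) (mul_nonneg (inv_nonneg.2 hprod.le) (sq_nonneg a))
        nlinarith

end EigenvalueDecay

theorem rkhs_projection_bias_one_sided_general
    (α c1 c2 : ℝ) (hα : 0 < α) (hc1 : 0 < c1)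
    (d1 d2 : ℕ) :
    ∃ C : ℝ, 0 < C ∧
      ∀ (lam : ℕ → ℝ)
        (_hlam : ∀ k : ℕ, c1 * ((k : ℝ) + 1) ^ (-(2 * α)) ≤ lam k ∧
          lam k ≤ c2 * ((k : ℝ) + 1) ^ (-(2 * α)))
        (φ : ℕ → Lp ℝ 2 unitMeasure) (_hON : Orthonormal ℝ φ)
        (_htotal : (Submodule.span ℝ (Set.range φ)).topologicalClosure = ⊤)
        (m ℓ : ℕ) (_hm : 0 < m) (_hℓ : 0 < ℓ)
        (A B1 B2 : Lp ℝ 2 (Measure.pi fun _ : Fin (d1 + d2) => unitMeasure))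
        (_hfinite : Summable fun kv : Fin (d1 + d2) → ℕ =>
          (∏ j, lam (kv j))⁻¹ * tensorCoef (d1 + d2) φ A kv ^ 2)
        (_hB1keep : ∀ kv : Fin (d1 + d2) → ℕ,
          (∀ j : Fin (d1 + d2), d1 ≤ (j : ℕ) → kv j < ℓ) →
          tensorCoef (d1 + d2) φ B1 kv = tensorCoef (d1 + d2) φ A kv)
        (_hB1drop : ∀ kv : Fin (d1 + d2) → ℕ,
          ¬(∀ j : Fin (d1 + d2), d1 ≤ (j : ℕ) → kv j < ℓ) →
          tensorCoef (d1 + d2) φ B1 kv = 0)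
        (_hB2keep : ∀ kv : Fin (d1 + d2) → ℕ,
          ((∀ j : Fin (d1 + d2), (j : ℕ) < d1 → kv j < m) ∧
            (∀ j : Fin (d1 + d2), d1 ≤ (j : ℕ) → kv j < ℓ)) →
          tensorCoef (d1 + d2) φ B2 kv = tensorCoef (d1 + d2) φ A kv)
        (_hB2drop : ∀ kv : Fin (d1 + d2) → ℕ,
          ¬((∀ j : Fin (d1 + d2), (j : ℕ) < d1 → kv j < m) ∧
            (∀ j : Fin (d1 + d2), d1 ≤ (j : ℕ) → kv j < ℓ)) →
          tensorCoef (d1 + d2) φ B2 kv = 0),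
        ‖A - B1‖ ^ 2 ≤
            C * (d2 : ℝ) * (ℓ : ℝ) ^ (-(2 * α)) *
              (∑' kv : Fin (d1 + d2) → ℕ,
                (∏ j, lam (kv j))⁻¹ * tensorCoef (d1 + d2) φ A kv ^ 2) ∧
        ‖B1 - B2‖ ^ 2 ≤
            C * (d1 : ℝ) * (m : ℝ) ^ (-(2 * α)) *
              ∑' kv : Fin (d1 + d2) → ℕ,
                (∏ j, lam (kv j))⁻¹ * tensorCoef (d1 + d2) φ A kv ^ 2 := by
  refine ⟨max 1 c2 ^ (d1 + d2), by positivity, ?_⟩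
  intro lam hlam φ hON htotal m ℓ hm hℓ A B1 B2 hfinite hB1keep hB1drop hB2keep hB2drop
  have hpos : ∀ k, 0 < lam k := fun k => (mul_pos hc1 (by positivity)).trans_le (hlam k).1
  have hkept : ∀ (kv : Fin (d1 + d2) → ℕ) {K : ℝ}, 0 ≤ K →
      (0 : ℝ) ^ 2 ≤ K * ((∏ j, lam (kv j))⁻¹ * tensorCoef (d1 + d2) φ A kv ^ 2) := by
    intro kv K hK
    rw [zero_pow two_ne_zero]
    exact mul_nonneg hK
      (mul_nonneg (inv_nonneg.2 (Finset.prod_nonneg fun j _ => (hpos _).le)) (sq_nonneg _))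
  have hdropped := @sq_le_of_apply_ge_of_mem_block (d1 + d2) lam c2 α hα.le hpos
    fun k => (hlam k).2
  constructor
  · refine norm_sub_sq_le_of_tensorCoef_sq_le hON htotal hfinite fun kv => ?_
    by_cases hy : ∀ j : Fin (d1 + d2), d1 ≤ (j : ℕ) → kv j < ℓ
    · rw [hB1keep kv hy, sub_self]
      exact hkept kv (by positivity)
    · obtain ⟨j, hj, hjℓ⟩ := not_forall₂.1 hy
      rw [hB1drop kv hy, sub_zero]
      exact hdropped ⟨hj, j.2⟩ hℓ (not_lt.1 hjℓ) _
  · refine norm_sub_sq_le_of_tensorCoef_sq_le hON htotal hfinite fun kv => ?_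
    by_cases hy : ∀ j : Fin (d1 + d2), d1 ≤ (j : ℕ) → kv j < ℓ
    · by_cases hx : ∀ j : Fin (d1 + d2), (j : ℕ) < d1 → kv j < m
      · rw [hB1keep kv hy, hB2keep kv ⟨hx, hy⟩, sub_self]
        exact hkept kv (by positivity)
      · obtain ⟨j, hj, hjm⟩ := not_forall₂.1 hx
        rw [hB1keep kv hy, hB2drop kv fun h => hx h.1, sub_zero]
        exact hdropped ⟨Nat.zero_le _, by omega⟩ hm (not_lt.1 hjm) _
    · rw [hB1drop kv hy, hB2drop kv fun h => hy h.2, sub_self]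
      exact hkept kv (by positivity)

/-- **One-sided bias bounds in the tensor-product RKHS.**
In the setting of the tensor RKHS `H(K)^{⊗d}` with `λ_k ≍ k^{−2α}`, let
`B1 = A ×_y P_L` (keeping the coefficients whose second-block indices are all
`< ℓ`) and `B2 = A ×_x P_M ×_y P_L` (keeping those with in addition all
first-block indices `< m`).  Then
(i) `‖A − B1‖²_{L²} ≤ C d2 ℓ^{−2α} ‖A‖²_{H(K)^{⊗d}}`, and
(ii) `‖B1 − B2‖²_{L²} ≤ C d1 m^{−2α} ‖A‖²_{H(K)^{⊗d}}`. -/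
theorem rkhs_projection_bias_one_sided
    (α c1 c2 : ℝ) (hα : 0 < α) (hc1 : 0 < c1) (hc2 : 0 < c2)
    (d1 d2 : ℕ) (hd1 : 0 < d1) (hd2 : 0 < d2) :
    ∃ C : ℝ, 0 < C ∧
      ∀ (lam : ℕ → ℝ)
        (_hlam : ∀ k : ℕ, c1 * ((k : ℝ) + 1) ^ (-(2 * α)) ≤ lam k ∧
          lam k ≤ c2 * ((k : ℝ) + 1) ^ (-(2 * α)))
        (φ : ℕ → Lp ℝ 2 unitMeasure) (_hON : Orthonormal ℝ φ)
        (_htotal : (Submodule.span ℝ (Set.range φ)).topologicalClosure = ⊤)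
        (m ℓ : ℕ) (_hm : 0 < m) (_hℓ : 0 < ℓ)
        (A B1 B2 : Lp ℝ 2 (Measure.pi fun _ : Fin (d1 + d2) => unitMeasure))
        (_hfinite : Summable fun kv : Fin (d1 + d2) → ℕ =>
          (∏ j, lam (kv j))⁻¹ * tensorCoef (d1 + d2) φ A kv ^ 2)
        (_hB1keep : ∀ kv : Fin (d1 + d2) → ℕ,
          (∀ j : Fin (d1 + d2), d1 ≤ (j : ℕ) → kv j < ℓ) →
          tensorCoef (d1 + d2) φ B1 kv = tensorCoef (d1 + d2) φ A kv)
        (_hB1drop : ∀ kv : Fin (d1 + d2) → ℕ,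
          ¬(∀ j : Fin (d1 + d2), d1 ≤ (j : ℕ) → kv j < ℓ) →
          tensorCoef (d1 + d2) φ B1 kv = 0)
        (_hB2keep : ∀ kv : Fin (d1 + d2) → ℕ,
          ((∀ j : Fin (d1 + d2), (j : ℕ) < d1 → kv j < m) ∧
            (∀ j : Fin (d1 + d2), d1 ≤ (j : ℕ) → kv j < ℓ)) →
          tensorCoef (d1 + d2) φ B2 kv = tensorCoef (d1 + d2) φ A kv)
        (_hB2drop : ∀ kv : Fin (d1 + d2) → ℕ,
          ¬((∀ j : Fin (d1 + d2), (j : ℕ) < d1 → kv j < m) ∧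
            (∀ j : Fin (d1 + d2), d1 ≤ (j : ℕ) → kv j < ℓ)) →
          tensorCoef (d1 + d2) φ B2 kv = 0),
        ‖A - B1‖ ^ 2 ≤
            C * (d2 : ℝ) * (ℓ : ℝ) ^ (-(2 * α)) *
              (∑' kv : Fin (d1 + d2) → ℕ,
                (∏ j, lam (kv j))⁻¹ * tensorCoef (d1 + d2) φ A kv ^ 2) ∧
        ‖B1 - B2‖ ^ 2 ≤
            C * (d1 : ℝ) * (m : ℝ) ^ (-(2 * α)) *
              ∑' kv : Fin (d1 + d2) → ℕ,
                (∏ j, lam (kv j))⁻¹ * tensorCoef (d1 + d2) φ A kv ^ 2 :=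
  rkhs_projection_bias_one_sided_general α c1 c2 hα hc1 d1 d2
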